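/- Let a, c ∈ ℝ with a ≠ 0 and 2a² − c² > 0, and set X = [[c, √2·a],[−√2·a, −c]] (so X = a(E₁ − E₂) + cE₃ ∈ sl(2,ℝ) with det X = 2a² − c² > 0). For t ∈ ℝ let p(t) = exp(tX), and define x(t) = (p₁₁(t)p₂₁(t) + p₁₂(t)p₂₂(t))/(p₂₁(t)² + p₂₂(t)²), y(t) = 1/(p₂₁(t)² + p₂₂(t)²). Then p₂₁(t)² + p₂₂(t)² > 0 and for all t: (x(t) + c/(√2·a))² + (y(t) − 1)² = c²/(2a²). In particular the projection of the one-parameter subgroup exp(tX) to H²(−4) lies on a Euclidean circle of center (−c/(√2 a), 1) and radius |c|/(√2|a|). -/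

import Mathlib

open Matrix

/-!
For trace-free `X` with `det X = ω² > 0`, Cayley–Hamilton gives `X² = -ω²`, so `X / ω` is a
complex structure and `exp (tX) = cos (tω) + (sin (tω) / ω) X`, a matrix of determinant one.
For `p` of determinant one, Lagrange's identity turns the circle equation for the Hopf image of
`p` into a quadratic equation in the entries of `p`, and for `p` in the span of `1` and `X` that
equation reduces to `det p = 1`.
-/

section

variable {𝔸 : Type*} [NormedRing 𝔸] [NormedAlgebra ℝ 𝔸]

theorem NormedSpace.exp_smul_of_mul_self_eq_neg_one {J : 𝔸} (hJ : J * J = -1) (t : ℝ) :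
    NormedSpace.exp (t • J) = Real.cos t • (1 : 𝔸) + Real.sin t • J := by
  let f := Complex.liftAux J hJ
  have hf : Continuous f := f.toLinearMap.continuous_of_finiteDimensional
  have h := NormedSpace.map_exp_of_mem_ball (𝕂 := ℝ) f hf (t * Complex.I)
    (by simp [NormedSpace.expSeries_radius_eq_top])
  rw [← Complex.exp_eq_exp_ℂ, Complex.liftAux_apply, Complex.liftAux_apply] at h
  simpa [Algebra.algebraMap_eq_smul_one, Complex.exp_ofReal_mul_I_re,
    Complex.exp_ofReal_mul_I_im] using h.symm

theorem NormedSpace.exp_smul_of_mul_self_eq_neg_sq_smul_one {X : 𝔸} {ω : ℝ} (hω : ω ≠ 0)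
    (hX : X * X = -(ω ^ 2) • (1 : 𝔸)) (t : ℝ) :
    NormedSpace.exp (t • X) = Real.cos (t * ω) • (1 : 𝔸) + (Real.sin (t * ω) / ω) • X := by
  have hJ : (ω⁻¹ • X) * (ω⁻¹ • X) = -1 := by
    rw [smul_mul_smul_comm, hX, smul_smul, show ω⁻¹ * ω⁻¹ * -ω ^ 2 = -1 by field_simp,
      neg_one_smul]
  have htX : t • X = (t * ω) • (ω⁻¹ • X) := by
    rw [smul_smul, mul_assoc, mul_inv_cancel₀ hω, mul_one]
  rw [htX, exp_smul_of_mul_self_eq_neg_one hJ, smul_smul, div_eq_mul_inv]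

end

theorem Matrix.mul_self_eq_neg_det_smul_one_of_trace_eq_zero {R : Type*} [CommRing R]
    {M : Matrix (Fin 2) (Fin 2) R} (h : M.trace = 0) :
    M * M = -M.det • (1 : Matrix (Fin 2) (Fin 2) R) := by
  have h11 : M 1 1 = -M 0 0 := by rw [trace_fin_two] at h; linear_combination h
  ext i j
  fin_cases i <;> fin_cases j <;> simp [mul_apply, det_fin_two, h11] <;> ring

theorem Matrix.det_smul_one_add_smul_of_trace_eq_zero {R : Type*} [CommRing R]
    {M : Matrix (Fin 2) (Fin 2) R} (h : M.trace = 0) (r s : R) :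
    (r • 1 + s • M).det = r ^ 2 + s ^ 2 * M.det := by
  have h11 : M 1 1 = -M 0 0 := by rw [trace_fin_two] at h; linear_combination h
  simp only [det_fin_two, add_apply, smul_apply, smul_eq_mul, one_apply_eq, one_apply_ne,
    zero_ne_one, one_ne_zero, ne_eq, not_false_eq_true, h11]
  ring

theorem Matrix.exp_smul_of_trace_eq_zero {X : Matrix (Fin 2) (Fin 2) ℝ} (htr : X.trace = 0)
    {ω : ℝ} (hω : ω ≠ 0) (hdet : X.det = ω ^ 2) (t : ℝ) :
    NormedSpace.exp (t • X) =
      Real.cos (t * ω) • (1 : Matrix (Fin 2) (Fin 2) ℝ) + (Real.sin (t * ω) / ω) • X := by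
  -- any norm will do: `exp` depends only on the topology
  let _ := Matrix.linftyOpNormedRing (n := Fin 2) (α := ℝ)
  let _ := Matrix.linftyOpNormedAlgebra (n := Fin 2) (R := ℝ) (α := ℝ)
  refine NormedSpace.exp_smul_of_mul_self_eq_neg_sq_smul_one hω ?_ t
  rw [mul_self_eq_neg_det_smul_one_of_trace_eq_zero htr, hdet]

theorem sq_add_sq_pos_of_det_ne_zero {R : Type*} [CommRing R] [LinearOrder R]
    [IsStrictOrderedRing R]
    {p : Matrix (Fin 2) (Fin 2) R} (h : p.det ≠ 0) : 0 < p 1 0 ^ 2 + p 1 1 ^ 2 := by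
  refine (add_nonneg (sq_nonneg _) (sq_nonneg _)).lt_of_ne fun h0 => h ?_
  obtain ⟨h10, h11⟩ := (add_eq_zero_iff_of_nonneg (sq_nonneg _) (sq_nonneg _)).mp h0.symm
  rw [det_fin_two, pow_eq_zero_iff two_ne_zero |>.mp h10, pow_eq_zero_iff two_ne_zero |>.mp h11]
  ring

theorem hopf_mem_circle {p : Matrix (Fin 2) (Fin 2) ℝ} (hdet : p.det = 1) {k : ℝ}
    (h : p 0 0 ^ 2 + p 0 1 ^ 2 + p 1 0 ^ 2 + p 1 1 ^ 2
      + 2 * k * (p 0 0 * p 1 0 + p 0 1 * p 1 1) = 2) :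
    ((p 0 0 * p 1 0 + p 0 1 * p 1 1) / (p 1 0 ^ 2 + p 1 1 ^ 2) + k) ^ 2
      + (1 / (p 1 0 ^ 2 + p 1 1 ^ 2) - 1) ^ 2 = k ^ 2 := by
  have hD := sq_add_sq_pos_of_det_ne_zero (hdet ▸ one_ne_zero)
  rw [det_fin_two] at hdet
  field_simp
  -- Lagrange: `(p₀₀p₁₀ + p₀₁p₁₁)² + (det p)² = (p₀₀² + p₀₁²)(p₁₀² + p₁₁²)`
  linear_combination (p 1 0 ^ 2 + p 1 1 ^ 2) * h - (p 0 0 * p 1 1 - p 0 1 * p 1 0 + 1) * hdet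

theorem sum_sq_add_mul_eq_two_mul_det {b c r s : ℝ} (hb : b ≠ 0) {p : Matrix (Fin 2) (Fin 2) ℝ}
    (hp : p = r • 1 + s • !![c, b; -b, -c]) :
    p 0 0 ^ 2 + p 0 1 ^ 2 + p 1 0 ^ 2 + p 1 1 ^ 2
      + 2 * (c / b) * (p 0 0 * p 1 0 + p 0 1 * p 1 1) = 2 * p.det := by
  subst hp
  simp only [det_fin_two, Matrix.add_apply, Matrix.smul_apply, smul_eq_mul, one_apply_eq,
    one_apply_ne, zero_ne_one, one_ne_zero, ne_eq, not_false_eq_true, of_apply, cons_val',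
    cons_val_zero, cons_val_one, cons_val_fin_one]
  field_simp
  ring

/-- The projection of the one-parameter subgroup exp(tX), X = a(E₁−E₂)+cE₃ with
det X = 2a² − c² > 0 and a ≠ 0, under the hyperbolic Hopf fibering lies on the Euclidean
circle (x + c/(√2 a))² + (y − 1)² = c²/(2a²) in H²(−4). -/
theorem elliptic_one_parameter_projection (a c : ℝ)
    (ha : a ≠ 0) (hd : 0 < 2 * a ^ 2 - c ^ 2)
    (X : Matrix (Fin 2) (Fin 2) ℝ)
    (hX : X = !![c, Real.sqrt 2 * a; -(Real.sqrt 2 * a), -c])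
    (p : ℝ → Matrix (Fin 2) (Fin 2) ℝ)
    (hp : ∀ t, p t = NormedSpace.exp (t • X))
    (x y : ℝ → ℝ)
    (hx : ∀ t, x t = (p t 0 0 * p t 1 0 + p t 0 1 * p t 1 1) /
      ((p t 1 0) ^ 2 + (p t 1 1) ^ 2))
    (hy : ∀ t, y t = 1 / ((p t 1 0) ^ 2 + (p t 1 1) ^ 2)) :
    (∀ t, 0 < (p t 1 0) ^ 2 + (p t 1 1) ^ 2) ∧
    (∀ t, (x t + c / (Real.sqrt 2 * a)) ^ 2 + (y t - 1) ^ 2 = c ^ 2 / (2 * a ^ 2)) := by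
  set ω := Real.sqrt (2 * a ^ 2 - c ^ 2)
  have hω : ω ≠ 0 := (Real.sqrt_pos.mpr hd).ne'
  have hsqrt2 : Real.sqrt 2 ^ 2 = 2 := Real.sq_sqrt zero_le_two
  have hXtr : X.trace = 0 := by simp [hX, trace_fin_two]
  have hXdet : X.det = ω ^ 2 := by
    rw [Real.sq_sqrt hd.le, hX, det_fin_two_of]
    linear_combination a ^ 2 * hsqrt2
  have hpt (t : ℝ) :
      p t = Real.cos (t * ω) • (1 : Matrix (Fin 2) (Fin 2) ℝ) + (Real.sin (t * ω) / ω) • X :=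
    (hp t).trans (exp_smul_of_trace_eq_zero hXtr hω hXdet t)
  have hdet (t : ℝ) : (p t).det = 1 := by
    rw [hpt, det_smul_one_add_smul_of_trace_eq_zero hXtr, hXdet, div_pow,
      div_mul_cancel₀ _ (pow_ne_zero 2 hω), Real.cos_sq_add_sin_sq]
  refine ⟨fun t => sq_add_sq_pos_of_det_ne_zero (by simp [hdet]), fun t => ?_⟩
  have hk : (c / (Real.sqrt 2 * a)) ^ 2 = c ^ 2 / (2 * a ^ 2) := by
    rw [div_pow, mul_pow, hsqrt2]
  rw [hx, hy, ← hk]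
  refine hopf_mem_circle (hdet t) ?_
  rw [sum_sq_add_mul_eq_two_mul_det (mul_ne_zero (by positivity) ha) (by rw [hpt, hX]), hdet,
    mul_one]
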